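/- Define 𝓵(α) = √(2^(1−α) + 2^(2−α/2)) − √(2^(1−α)·3^α·6^(−α/2) + 4^(1−α)·3^(α/2)·2^(α/2)) for α ∈ [0,2). Then 𝓵(0) = 0, 𝓵 is increasing on [0,2), and 𝓵(α) > 0 for every α ∈ (0,2). -/

import Mathlib

/-
With `r = 2^(-α/4)` and `e = (8/3)^(-α/4)` one has `𝓵(α) = √(2r⁴ + 4r²) - √6 e`, hence
`𝓵'(α) = √6 (log(8/3)/4) e - log 2 · r²(r² + 1) / √(2r⁴ + 4r²)`.
For `α ∈ [0, 2]` we have `1/2 ≤ r² ≤ 1` and `r³ ≤ e²` (because `(8/3)² ≤ 2³`).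
After squaring, `𝓵' > 0` follows from `16 log² 2 < 9 log² (8/3)` (because `2⁴ < (8/3)³`)
together with the polynomial inequality `3(r² + 1)² ≤ 4r(r² + 2)` on `[1/√2, 1]`.
So `𝓵` is strictly increasing on `[0, 2]`, and `𝓵(0) = √6 - √6 = 0`.
-/

open Real

/-- The difference `𝓵(α)` between the `v`-value at the planar central
configuration and at the tetrahedral one. -/
noncomputable def vDiff (α : ℝ) : ℝ :=
  Real.sqrt ((2:ℝ) ^ (1 - α) + (2:ℝ) ^ (2 - α/2)) -
    Real.sqrt ((2:ℝ) ^ (1 - α) * (3:ℝ) ^ α * (6:ℝ) ^ (-(α/2)) +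
      (4:ℝ) ^ (1 - α) * (3:ℝ) ^ (α/2) * (2:ℝ) ^ (α/2))

lemma three_mul_sq_add_one_le {r : ℝ} (hr0 : 0 ≤ r) (hr : 1 / 2 ≤ r ^ 2) (hr1 : r ≤ 1) :
    3 * (r ^ 2 + 1) ^ 2 ≤ 4 * r * (r ^ 2 + 2) := by
  have hr7 : 7 / 10 ≤ r := by nlinarith
  -- `4r(r² + 2) - 3(r² + 1)² = (1 - r)(3r³ - r² + 5r - 3)`
  have hcubic : 0 ≤ 3 * r ^ 3 - r ^ 2 + 5 * r - 3 := by nlinarith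
  nlinarith [mul_nonneg (sub_nonneg.2 hr1) hcubic]

lemma mul_sq_mul_sq_add_one_div_sqrt_lt {L κ r e : ℝ} (hL : 0 < L) (hLκ : 4 * L < 3 * κ)
    (hr0 : 0 < r) (hr : 1 / 2 ≤ r ^ 2) (hr1 : r ≤ 1) (he : 0 ≤ e) (hre : r ^ 3 ≤ e ^ 2) :
    L * r ^ 2 * (r ^ 2 + 1) / √(2 * r ^ 4 + 4 * r ^ 2) < √6 * (κ / 4) * e := by
  have hpoly := three_mul_sq_add_one_le hr0.le hr hr1
  have hsq : 16 * L ^ 2 < 9 * κ ^ 2 := by nlinarith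
  have hκ : 0 < κ := by linarith
  have hrad : 0 < 2 * r ^ 4 + 4 * r ^ 2 := by positivity
  rw [div_lt_iff₀ (sqrt_pos.2 hrad)]
  refine lt_of_pow_lt_pow_left₀ 2 (by positivity) ?_
  calc (L * r ^ 2 * (r ^ 2 + 1)) ^ 2 = r ^ 4 * (L ^ 2 * (r ^ 2 + 1) ^ 2) := by ring
    _ < r ^ 4 * (3 * κ ^ 2 / 4 * r * (r ^ 2 + 2)) := by
      refine mul_lt_mul_of_pos_left ?_ (by positivity)
      nlinarith [mul_lt_mul_of_pos_right hsq (by positivity : (0:ℝ) < (r ^ 2 + 1) ^ 2),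
        mul_le_mul_of_nonneg_left hpoly (sq_nonneg κ)]
    _ = 3 * κ ^ 2 / 4 * r ^ 3 * (r ^ 2 * (r ^ 2 + 2)) := by ring
    _ ≤ 3 * κ ^ 2 / 4 * e ^ 2 * (r ^ 2 * (r ^ 2 + 2)) := by gcongr
    _ = (√6 * (κ / 4) * e * √(2 * r ^ 4 + 4 * r ^ 2)) ^ 2 := by
      rw [mul_pow, mul_pow, mul_pow, sq_sqrt (by norm_num), sq_sqrt hrad.le]; ring

lemma four_mul_log_two_lt : 4 * log 2 < 3 * log (8 / 3) := by
  have h := log_lt_log (by norm_num) (show (2:ℝ) ^ 4 < (8 / 3) ^ 3 by norm_num)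
  simpa only [log_pow, Nat.cast_ofNat] using h

lemma two_mul_log_eight_div_three_le : 2 * log (8 / 3) ≤ 3 * log 2 := by
  have h := log_le_log (by norm_num) (show ((8:ℝ) / 3) ^ 2 ≤ 2 ^ 3 by norm_num)
  simpa only [log_pow, Nat.cast_ofNat] using h

lemma vDiff_eq (α : ℝ) :
    vDiff α = √(2 * ((2:ℝ) ^ (-(α / 4))) ^ 4 + 4 * ((2:ℝ) ^ (-(α / 4))) ^ 2) -
      √6 * (8 / 3 : ℝ) ^ (-(α / 4)) := by
  have hlog4 : log 4 = 2 * log 2 := by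
    rw [show (4:ℝ) = 2 ^ 2 by norm_num, log_pow]; norm_num
  have hlog6 : log 6 = log 2 + log 3 := by
    rw [show (6:ℝ) = 2 * 3 by norm_num, log_mul (by norm_num) (by norm_num)]
  have hlog83 : log (8 / 3) = 3 * log 2 - log 3 := by
    rw [log_div (by norm_num) (by norm_num), show (8:ℝ) = 2 ^ 3 by norm_num, log_pow]; norm_num
  -- Both sides of each power identity are compared through their logarithms,
  -- which are linear forms in `log 2`, `log 3` and `α`.
  have hfirst : (2:ℝ) ^ (1 - α) + 2 ^ (2 - α / 2) =
      2 * ((2:ℝ) ^ (-(α / 4))) ^ 4 + 4 * ((2:ℝ) ^ (-(α / 4))) ^ 2 := by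
    congr 1 <;>
      refine log_injOn_pos (by positivity : (0:ℝ) < _) (by positivity : (0:ℝ) < _) ?_ <;>
      simp (disch := positivity) only [log_mul, log_rpow, log_pow, hlog4] <;> push_cast <;> ring
  have hsecond : (2:ℝ) ^ (1 - α) * 3 ^ α * 6 ^ (-(α / 2)) +
      4 ^ (1 - α) * 3 ^ (α / 2) * 2 ^ (α / 2) =
      2 * ((8 / 3 : ℝ) ^ (-(α / 4))) ^ 2 + 4 * ((8 / 3 : ℝ) ^ (-(α / 4))) ^ 2 := by
    congr 1 <;>
      refine log_injOn_pos (by positivity : (0:ℝ) < _) (by positivity : (0:ℝ) < _) ?_ <;>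
      simp (disch := positivity) only [log_mul, log_rpow, log_pow, hlog4, hlog6, hlog83] <;>
      push_cast <;> ring
  rw [vDiff, hfirst, hsecond, ← add_mul, show (2:ℝ) + 4 = 6 by norm_num, sqrt_mul (by norm_num),
    sqrt_sq (by positivity)]

lemma hasDerivAt_vDiff (α : ℝ) :
    HasDerivAt vDiff (√6 * (log (8 / 3) / 4) * (8 / 3 : ℝ) ^ (-(α / 4)) -
      log 2 * ((2:ℝ) ^ (-(α / 4))) ^ 2 * (((2:ℝ) ^ (-(α / 4))) ^ 2 + 1) /
        √(2 * ((2:ℝ) ^ (-(α / 4))) ^ 4 + 4 * ((2:ℝ) ^ (-(α / 4))) ^ 2)) α := by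
  have hexp : HasDerivAt (fun x : ℝ => -(x / 4)) (-(1 / 4)) α :=
    ((hasDerivAt_id α).div_const 4).neg
  have hr := hexp.const_rpow (a := 2) two_pos
  have he := hexp.const_rpow (a := 8 / 3) (by norm_num)
  have hrad : 2 * ((2:ℝ) ^ (-(α / 4))) ^ 4 + 4 * ((2:ℝ) ^ (-(α / 4))) ^ 2 ≠ 0 := by
    positivity
  rw [show vDiff = _ from funext vDiff_eq]
  refine ((((hr.pow 4).const_mul 2).add ((hr.pow 2).const_mul 4)).sqrt hrad |>.sub
    (he.const_mul √6)).congr_deriv ?_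
  simp only [Pi.add_apply, Pi.pow_apply, Nat.cast_ofNat]
  ring

lemma deriv_vDiff_pos {α : ℝ} (h0 : 0 ≤ α) (h2 : α ≤ 2) : 0 < deriv vDiff α := by
  have hL : 0 < log 2 := log_pos one_lt_two
  have hr : 1 / 2 ≤ ((2:ℝ) ^ (-(α / 4))) ^ 2 := by
    rw [← log_le_log_iff (by norm_num) (by positivity)]
    simp (disch := positivity) only [log_pow, log_rpow, one_div, log_inv]
    nlinarith
  have hre : ((2:ℝ) ^ (-(α / 4))) ^ 3 ≤ ((8 / 3 : ℝ) ^ (-(α / 4))) ^ 2 := by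
    rw [← log_le_log_iff (by positivity) (by positivity)]
    simp (disch := positivity) only [log_pow, log_rpow]
    nlinarith [two_mul_log_eight_div_three_le]
  rw [(hasDerivAt_vDiff α).deriv, sub_pos]
  exact mul_sq_mul_sq_add_one_div_sqrt_lt hL four_mul_log_two_lt (by positivity) hr
    (rpow_le_one_of_one_le_of_nonpos one_le_two (by linarith)) (by positivity) hre

lemma vDiff_strictMonoOn : StrictMonoOn vDiff (Set.Icc 0 2) :=
  strictMonoOn_of_deriv_pos (convex_Icc 0 2)
    (fun α _ => (hasDerivAt_vDiff α).continuousAt.continuousWithinAt)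
    fun α hα => by
      rw [interior_Icc] at hα
      exact deriv_vDiff_pos hα.1.le hα.2.le

lemma vDiff_zero : vDiff 0 = 0 := by
  norm_num [vDiff_eq]

/-- `𝓵(0) = 0`, `𝓵` is increasing on `[0,2)`, and `𝓵(α) > 0` for every
`α ∈ (0,2)`. -/
theorem vDiff_zero_strictMono_pos :
    vDiff 0 = 0 ∧ StrictMonoOn vDiff (Set.Ico (0:ℝ) 2) ∧
      ∀ α ∈ Set.Ioo (0:ℝ) 2, 0 < vDiff α := by
  refine ⟨vDiff_zero, vDiff_strictMonoOn.mono Set.Ico_subset_Icc_self, fun α hα => ?_⟩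
  simpa [vDiff_zero] using
    vDiff_strictMonoOn (Set.left_mem_Icc.2 zero_le_two) (Set.Ioo_subset_Icc_self hα) hα.1
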